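/- For every instance of Seat Arrangement with binary preferences, writing n = |P| and m = |E(G)|, there exists a maximin arrangement π_f such that for every arrangement π either sw(π) ≤ sw(π_f) or n · sw(π) ≤ 2m · sw(π_f). (Consequently, the price of fairness of binary Seat Arrangement is at most the average degree 2m/n of the seat graph.) -/

import Mathlib

open scoped Classical

noncomputable section

namespace SeatArrangement

variable {P V : Type*}

/-- The utility of agent `p` under arrangement `π`:
the sum, over the seat-graph neighbors `v` of `π p`, of `p`'s preference for the agent seated
at `v`. -/
def utility [Fintype V] (G : SimpleGraph V) (f : P → P → ℝ) (π : P ≃ V) (p : P) : ℝ :=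
  ∑ v : V, if G.Adj (π p) v then f p (π.symm v) else 0

/-- The social welfare of an arrangement: the sum of the utilities of all agents. -/
def sw [Fintype P] [Fintype V] (G : SimpleGraph V) (f : P → P → ℝ) (π : P ≃ V) : ℝ :=
  ∑ p : P, utility G f π p

/-- The `(p,q)`-swap arrangement of `π`. -/
def swapArr (π : P ≃ V) (p q : P) : P ≃ V := (Equiv.swap p q).trans π

/-- `{p, q}` is a blocking pair for `π`: both agents strictly improve by swapping seats. -/
def blocking [Fintype V] (G : SimpleGraph V) (f : P → P → ℝ) (π : P ≃ V) (p q : P) : Prop :=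
  p ≠ q ∧ utility G f π p < utility G f (swapArr π p q) p
        ∧ utility G f π q < utility G f (swapArr π p q) q

/-- An arrangement is stable if it has no blocking pair. -/
def stable [Fintype V] (G : SimpleGraph V) (f : P → P → ℝ) (π : P ≃ V) : Prop :=
  ∀ p q : P, ¬ blocking G f π p q

/-- An arrangement is envy-free if no agent would strictly improve by taking
another agent's seat (via a swap). -/
def envyFree [Fintype V] (G : SimpleGraph V) (f : P → P → ℝ) (π : P ≃ V) : Prop :=
  ∀ p q : P, p ≠ q → utility G f (swapArr π p q) p ≤ utility G f π p

/-- The least utility of an agent under `π` (for a finite nonempty set of agents, the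
infimum of the range of utilities is the minimum utility). -/
def minUtil [Fintype V] (G : SimpleGraph V) (f : P → P → ℝ) (π : P ≃ V) : ℝ :=
  sInf (Set.range (utility G f π))

/-- A maximin arrangement maximizes the least utility of an agent. -/
def maximin [Fintype V] (G : SimpleGraph V) (f : P → P → ℝ) (πf : P ≃ V) : Prop :=
  ∀ π : P ≃ V, minUtil G f π ≤ minUtil G f πf

/-- A maximum arrangement maximizes the social welfare. -/
def maximum [Fintype P] [Fintype V] (G : SimpleGraph V) (f : P → P → ℝ) (πm : P ≃ V) : Prop :=
  ∀ π : P ≃ V, sw G f π ≤ sw G f πm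

end SeatArrangement

open SeatArrangement

/-!
Utilities are nonnegative, so if the maximin value is `0` then every arrangement is maximin
and a welfare-maximizing one works. Otherwise, since utilities under binary preferences are
natural numbers, a maximin arrangement gives every agent utility at least `1` and so has
welfare at least `n`, while any arrangement has welfare at most `∑ v, deg v = 2m`.
-/

namespace SeatArrangement

variable {P V : Type*} (G : SimpleGraph V)

lemma symm_ne_of_adj {π : P ≃ V} {p : P} {v : V} (h : G.Adj (π p) v) : π.symm v ≠ p := by
  rintro rfl
  simp at h

variable [Fintype V]

lemma utility_mono {f g : P → P → ℝ} (hfg : ∀ p q, p ≠ q → f p q ≤ g p q) (π : P ≃ V) (p : P) :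
    utility G f π p ≤ utility G g π p := by
  refine Finset.sum_le_sum fun v _ => ?_
  split_ifs with h
  · exact hfg p _ (symm_ne_of_adj G h).symm
  · exact le_rfl

lemma utility_zero (π : P ≃ V) (p : P) : utility G (fun _ _ => 0) π p = 0 := by
  simp [utility]

lemma utility_one (π : P ≃ V) (p : P) : utility G (fun _ _ => 1) π p = G.degree (π p) := by
  simp [utility, Finset.sum_boole, SimpleGraph.degree, SimpleGraph.neighborFinset_eq_filter]

lemma utility_nonneg {f : P → P → ℝ} (hf : ∀ p q, p ≠ q → 0 ≤ f p q) (π : P ≃ V) (p : P) :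
    0 ≤ utility G f π p :=
  utility_zero G π p ▸ utility_mono G hf π p

lemma utility_le_degree {f : P → P → ℝ} (hf : ∀ p q, p ≠ q → f p q ≤ 1) (π : P ≃ V) (p : P) :
    utility G f π p ≤ G.degree (π p) :=
  utility_one G π p ▸ utility_mono G hf π p

lemma exists_utility_eq_natCast {f : P → P → ℝ} (hbin : ∀ p q, p ≠ q → f p q = 0 ∨ f p q = 1)
    (π : P ≃ V) (p : P) : ∃ n : ℕ, utility G f π p = n := by
  have hterm : ∀ v, ∃ k : ℕ, (if G.Adj (π p) v then f p (π.symm v) else 0) = k := by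
    intro v
    split_ifs with h
    · rcases hbin p _ (symm_ne_of_adj G h).symm with h0 | h1
      exacts [⟨0, by simp [h0]⟩, ⟨1, by simp [h1]⟩]
    · exact ⟨0, by simp⟩
  choose k hk using hterm
  exact ⟨∑ v, k v, by simp only [utility, hk, Nat.cast_sum]⟩

lemma minUtil_le_utility [Finite P] (f : P → P → ℝ) (π : P ≃ V) (p : P) :
    minUtil G f π ≤ utility G f π p :=
  csInf_le (Set.finite_range _).bddBelow ⟨p, rfl⟩

lemma minUtil_nonneg {f : P → P → ℝ} (hf : ∀ p q, p ≠ q → 0 ≤ f p q) (π : P ≃ V) :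
    0 ≤ minUtil G f π :=
  Real.sInf_nonneg <| Set.forall_mem_range.2 <| utility_nonneg G hf π

lemma sw_le_two_mul_card_edgeSet [Fintype P] {f : P → P → ℝ} (hf : ∀ p q, p ≠ q → f p q ≤ 1)
    (π : P ≃ V) : sw G f π ≤ 2 * G.edgeSet.ncard := by
  calc sw G f π ≤ ∑ p, (G.degree (π p) : ℝ) :=
        Finset.sum_le_sum fun p _ => utility_le_degree G hf π p
    _ = ∑ v, (G.degree v : ℝ) := Equiv.sum_comp π fun v => (G.degree v : ℝ)
    _ = 2 * G.edgeSet.ncard := by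
        rw [Set.ncard_eq_toFinset_card']
        exact_mod_cast G.sum_degrees_eq_twice_card_edges

lemma card_le_sw_of_minUtil_pos [Fintype P] {f : P → P → ℝ}
    (hbin : ∀ p q, p ≠ q → f p q = 0 ∨ f p q = 1) {π : P ≃ V} (hπ : 0 < minUtil G f π) :
    (Fintype.card P : ℝ) ≤ sw G f π := by
  -- binary utilities are natural numbers, so positive ones are at least `1`
  have hone : ∀ p, 1 ≤ utility G f π p := fun p => by
    obtain ⟨n, hn⟩ := exists_utility_eq_natCast G hbin π p
    have hpos : (0 : ℝ) < n := hn ▸ hπ.trans_le (minUtil_le_utility G f π p)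
    rw [hn]
    exact Nat.one_le_cast.mpr (Nat.cast_pos.mp hpos)
  simpa [sw] using Finset.sum_le_sum fun p (_ : p ∈ Finset.univ) => hone p

end SeatArrangement

theorem binary_pof_le_average_degree {P V : Type*} [Fintype P] [Fintype V]
    (G : SimpleGraph V) (f : P → P → ℝ)
    (hbin : ∀ p q : P, p ≠ q → f p q = 0 ∨ f p q = 1)
    (hne : Nonempty (P ≃ V)) :
    ∃ πf : P ≃ V, maximin G f πf ∧
      ∀ π : P ≃ V, sw G f π ≤ sw G f πf ∨
        (Fintype.card P : ℝ) * sw G f π ≤ (2 * (G.edgeSet.ncard : ℝ)) * sw G f πf := by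
  have hnonneg : ∀ p q : P, p ≠ q → 0 ≤ f p q := fun p q h => by
    rcases hbin p q h with h | h <;> simp [h]
  have hle_one : ∀ p q : P, p ≠ q → f p q ≤ 1 := fun p q h => by
    rcases hbin p q h with h | h <;> simp [h]
  obtain ⟨πf, hπf⟩ := Finite.exists_max (minUtil G f)
  rcases (minUtil_nonneg G hnonneg πf).eq_or_lt with hzero | hpos
  · obtain ⟨πm, hπm⟩ := Finite.exists_max (sw G f)
    exact ⟨πm, fun π => (hπf π).trans (hzero ▸ minUtil_nonneg G hnonneg πm),
      fun π => Or.inl (hπm π)⟩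
  · refine ⟨πf, hπf, fun π => Or.inr ?_⟩
    calc (Fintype.card P : ℝ) * sw G f π ≤ Fintype.card P * (2 * G.edgeSet.ncard) := by
          gcongr
          exact sw_le_two_mul_card_edgeSet G hle_one π
      _ ≤ (2 * G.edgeSet.ncard) * sw G f πf := by
          rw [mul_comm]
          gcongr
          exact card_le_sw_of_minUtil_pos G hbin hpos
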